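/- arXiv:0907.1106 — 6 statements merged into one kernel-verified Lean document; each statement's English description precedes it below -/
import Mathlib

section
/- Let V and W be finite dimensional vector spaces over a field K, and let π_W : V ⊕ W → W be the projection. The map from the Grassmannian of r-dimensional subspaces of V ⊕ W to the disjoint union over s + t = r of Gr(s, V) × Gr(t, W), sending U to (U ∩ V, π_W(U)), is surjective, and the fibre over a pair (A, B) is in bijection with Hom_K(B, W/A). -/
/-!
Restricting `π_W` to `U` has kernel `U ∩ V`, so rank–nullity gives
`dim (U ∩ V) + dim π_W(U) = dim U`. For the fibre over `(A, B)`, a subspace `U` determines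
`f : B → V ⧸ A` by `π_W(u) ↦ [u_V]`, well defined because two choices of `u` differ by an
element of `U ∩ V = A`; conversely `f` is recovered from `U` as the subspace of all `(v, w)`
with `w ∈ B` and `[v] = f w`.
-/

open Module LinearMap

theorem LinearMap.exists_comp_eq_of_surjective_of_ker_le {R M N P : Type*} [Ring R]
    [AddCommGroup M] [Module R M] [AddCommGroup N] [Module R N] [AddCommGroup P] [Module R P]
    {p : M →ₗ[R] N} (hp : Function.Surjective p) {g : M →ₗ[R] P} (h : ker p ≤ ker g) :
    ∃ f : N →ₗ[R] P, f ∘ₗ p = g :=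
  ⟨(ker p).liftQ g h ∘ₗ (p.quotKerEquivOfSurjective hp).symm.toLinearMap, by
    ext x
    simp⟩

namespace Submodule

variable {K V W : Type*} [DivisionRing K] [AddCommGroup V] [Module K V]
  [AddCommGroup W] [Module K W]

theorem finrank_comap_inl_add_finrank_map_snd (U : Submodule K (V × W))
    [FiniteDimensional K U] :
    finrank K (U.comap (LinearMap.inl K V W)) + finrank K (U.map (LinearMap.snd K V W)) =
      finrank K U := by
  let φ := (LinearMap.snd K V W).domRestrict U
  have hker : finrank K (ker φ) = finrank K (U.comap (LinearMap.inl K V W)) :=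
    calc finrank K (ker φ)
        = finrank K ((ker φ).map U.subtype) := (finrank_map_subtype_eq U _).symm
      _ = finrank K ((U.comap (LinearMap.inl K V W)).map (LinearMap.inl K V W)) := by
          rw [ker_domRestrict, map_comap_subtype, map_comap_eq, range_inl, inf_comm]
      _ = finrank K (U.comap (LinearMap.inl K V W)) :=
          (equivMapOfInjective _ inl_injective _).finrank_eq.symm
  rw [← hker, ← range_domRestrict, add_comm, finrank_range_add_finrank_ker]

variable {A : Submodule K V} {B : Submodule K W}

def quotientGraph (f : B →ₗ[K] V ⧸ A) : Submodule K (V × W) where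
  carrier := {x | ∃ hx : x.2 ∈ B, A.mkQ x.1 = f ⟨x.2, hx⟩}
  add_mem' := by
    rintro x y ⟨hx, hfx⟩ ⟨hy, hfy⟩
    refine ⟨B.add_mem hx hy, ?_⟩
    change A.mkQ (x.1 + y.1) = f (⟨x.2, hx⟩ + ⟨y.2, hy⟩)
    rw [map_add, map_add, hfx, hfy]
  zero_mem' := ⟨B.zero_mem, (map_zero A.mkQ).trans (map_zero f).symm⟩
  smul_mem' := by
    rintro c x ⟨hx, hfx⟩
    refine ⟨B.smul_mem c hx, ?_⟩
    change A.mkQ (c • x.1) = f (c • ⟨x.2, hx⟩)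
    rw [map_smul, map_smul, hfx]

theorem mem_quotientGraph {f : B →ₗ[K] V ⧸ A} {x : V × W} :
    x ∈ quotientGraph f ↔ ∃ hx : x.2 ∈ B, A.mkQ x.1 = f ⟨x.2, hx⟩ :=
  Iff.rfl

theorem comap_inl_quotientGraph (f : B →ₗ[K] V ⧸ A) :
    (quotientGraph f).comap (LinearMap.inl K V W) = A := by
  ext v
  change (∃ _ : (0 : W) ∈ B, A.mkQ v = f 0) ↔ v ∈ A
  simp [Quotient.mk_eq_zero]

theorem map_snd_quotientGraph (f : B →ₗ[K] V ⧸ A) :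
    (quotientGraph f).map (LinearMap.snd K V W) = B := by
  ext w
  simp only [mem_map, LinearMap.snd_apply, Prod.exists, mem_quotientGraph]
  refine ⟨fun ⟨_, _, ⟨hw, _⟩, rfl⟩ ↦ hw, fun hw ↦ ?_⟩
  obtain ⟨v, hv⟩ := A.mkQ_surjective (f ⟨w, hw⟩)
  exact ⟨v, w, ⟨hw, hv⟩, rfl⟩

theorem quotientGraph_injective :
    Function.Injective (quotientGraph : (B →ₗ[K] V ⧸ A) → Submodule K (V × W)) := by
  intro f g hfg
  ext b
  obtain ⟨v, hv⟩ := A.mkQ_surjective (f b)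
  have hg : (v, (b : W)) ∈ quotientGraph g := hfg ▸ ⟨b.2, hv⟩
  obtain ⟨_, hgv⟩ := hg
  rw [← hv, hgv]

theorem exists_quotientGraph_eq (U : Submodule K (V × W)) :
    ∃ f : U.map (LinearMap.snd K V W) →ₗ[K] V ⧸ U.comap (LinearMap.inl K V W),
      quotientGraph f = U := by
  set A := U.comap (LinearMap.inl K V W)
  set p := (LinearMap.snd K V W).submoduleMap U
  have hker : ker p ≤ ker (A.mkQ ∘ₗ LinearMap.fst K V W ∘ₗ U.subtype) := by
    rintro ⟨⟨v, w⟩, hu⟩ hw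
    obtain rfl : w = 0 := congrArg Subtype.val hw
    simp only [LinearMap.mem_ker, LinearMap.comp_apply, mkQ_apply, Quotient.mk_eq_zero]
    exact hu
  -- `f` sends `u.2` to the class of `u.1` for `u ∈ U`.
  obtain ⟨f, hf⟩ := LinearMap.exists_comp_eq_of_surjective_of_ker_le
    (LinearMap.submoduleMap_surjective _ U) hker
  have hf (u : U) : f (p u) = A.mkQ (u : V × W).1 := LinearMap.congr_fun hf u
  refine ⟨f, le_antisymm ?_ fun x hx ↦ ⟨mem_map_of_mem hx, (hf ⟨x, hx⟩).symm⟩⟩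
  rintro ⟨v, w⟩ ⟨hw, hv⟩
  obtain ⟨u, hu, rfl⟩ := id hw
  have hvu : (v - u.1, 0) ∈ U := by
    change v - u.1 ∈ A
    rw [← Quotient.mk_eq_zero, Quotient.mk_sub]
    exact sub_eq_zero.2 (hv.trans (hf ⟨u, hu⟩))
  convert U.add_mem hvu hu using 1
  ext <;> simp

variable (A B) in
noncomputable def quotientGraphEquiv :
    (B →ₗ[K] V ⧸ A) ≃ {U : Submodule K (V × W) //
      U.comap (LinearMap.inl K V W) = A ∧ U.map (LinearMap.snd K V W) = B} :=
  Equiv.ofBijective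
    (fun f ↦ ⟨quotientGraph f, comap_inl_quotientGraph f, map_snd_quotientGraph f⟩)
    ⟨fun _ _ h ↦ quotientGraph_injective (congrArg Subtype.val h), by
      rintro ⟨U, rfl, rfl⟩
      obtain ⟨f, hf⟩ := exists_quotientGraph_eq U
      exact ⟨f, Subtype.ext hf⟩⟩

end Submodule

open Submodule

/-- For finite dimensional `K`-vector spaces `V`, `W`, the map `U ↦ (U ∩ V, π_W(U))` from the
Grassmannian of `r`-dimensional subspaces of `V ⊕ W` to `∐_{s+t=r} Gr(s,V) × Gr(t,W)` is
well defined and surjective, and its fibre over `(A, B)` is in bijection with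
`Hom_K(B, V/A)` (the fibre over `(A,B)` consists of graphs of lifts `B → V/A`). -/
theorem grassmannian_fibration (K V W : Type) [Field K]
    [AddCommGroup V] [Module K V] [AddCommGroup W] [Module K W]
    [FiniteDimensional K V] [FiniteDimensional K W] (r : ℕ) :
    (∀ U : Submodule K (V × W), finrank K U = r →
      finrank K (U.comap (LinearMap.inl K V W)) + finrank K (U.map (LinearMap.snd K V W)) = r) ∧
    (∀ (A : Submodule K V) (B : Submodule K W), finrank K A + finrank K B = r →
      Nonempty ({U : Submodule K (V × W) // finrank K U = r ∧
          U.comap (LinearMap.inl K V W) = A ∧ U.map (LinearMap.snd K V W) = B} ≃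
        (B →ₗ[K] V ⧸ A))) := by
  refine ⟨fun U hU ↦ hU ▸ finrank_comap_inl_add_finrank_map_snd U, fun A B hAB ↦ ⟨?_⟩⟩
  refine (Equiv.subtypeEquivRight fun U ↦ ?_).trans (quotientGraphEquiv A B).symm
  refine ⟨And.right, fun hU ↦ ⟨?_, hU⟩⟩
  rw [← finrank_comap_inl_add_finrank_map_snd U, hU.1, hU.2, hAB]
end

section
/- Let K be a finite field with q elements. Let e = (e^0, ..., e^ν) and r = (r^0, ..., r^ν) be sequences of non-negative integers, and let X be the representation of the linearly oriented quiver A_{ν+1} given by surjective linear maps K^{e^ν + r^0} ↠ K^{e^{ν-1} + r^1} ↠ ... ↠ K^{e^0 + r^ν}. Then X has a subrepresentation of dimension vector (r^0, r^1, ..., r^ν) if and only if e^0 ≥ 0 and e^i ≤ e^{i+1} for all i; moreover, when this holds, the number of such subrepresentations equals ∏_{i=0}^ν [e^{ν-i} - e^{ν-i-1} + r^i choose r^i]_q (with e^{-1} := 0). -/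
/-- The Gaussian binomial coefficient `[n choose k]_q` evaluated at a natural number `q`,
via the `q`-Pascal recursion `[n+1,k+1]_q = [n,k]_q + q^{k+1}·[n,k+1]_q`. -/
def gaussChoose (q : ℕ) : ℕ → ℕ → ℕ
  | _, 0 => 1
  | 0, _ + 1 => 0
  | n + 1, k + 1 => gaussChoose q n k + q ^ (k + 1) * gaussChoose q n (k + 1)

/-!
Forgetting the subspace at vertex `0` maps the subrepresentations of
`V 0 ↠ V 1 ↠ ⋯ ↠ V ν` with dimension vector `(r 0, …, r ν)` onto those of `V 1 ↠ ⋯ ↠ V ν`, and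
the fibre over `(U 1, …, U ν)` consists of the `r 0`-dimensional subspaces of `f₀⁻¹(U 1)`, a
space of dimension `dim ker f₀ + r 1`. Hence the count is a product of Grassmannian counts
`[dim ker fᵢ + r (i+1) choose r i]_q · [dim V ν choose r ν]_q`; for `V i = K^{e^{ν-i} + r^i}` one
has `dim ker fᵢ + r (i+1) = e^{ν-i} - e^{ν-i-1} + r^i`. A subrepresentation exists iff no factor
vanishes, i.e. iff `r i ≤ dim ker fᵢ + r (i+1)` for all `i`, which is the monotonicity of `e`.
-/

open Module Submodule Finset

lemma gaussChoose_zero_right (q n : ℕ) : gaussChoose q n 0 = 1 := by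
  cases n <;> rfl

lemma gaussChoose_eq_zero_of_lt {q n k : ℕ} (h : n < k) : gaussChoose q n k = 0 := by
  induction n generalizing k with
  | zero => obtain ⟨k, rfl⟩ := Nat.exists_eq_succ_of_ne_zero (by omega : k ≠ 0); rfl
  | succ n ih =>
    obtain ⟨k, rfl⟩ := Nat.exists_eq_succ_of_ne_zero (by omega : k ≠ 0)
    simp only [gaussChoose, ih (by omega : n < k), ih (by omega : n < k + 1), mul_zero,
      add_zero]

lemma gaussChoose_pos {q n k : ℕ} (h : k ≤ n) : 0 < gaussChoose q n k := by
  induction n generalizing k with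
  | zero => simp [Nat.le_zero.1 h, gaussChoose_zero_right]
  | succ n ih =>
    rcases k with _ | k
    · simp [gaussChoose_zero_right]
    · exact (ih (by omega)).trans_le (Nat.le_add_right _ _)

lemma gaussChoose_ne_zero_iff {q n k : ℕ} : gaussChoose q n k ≠ 0 ↔ k ≤ n :=
  ⟨fun h => not_lt.1 fun hlt => h (gaussChoose_eq_zero_of_lt hlt),
    fun h => (gaussChoose_pos h).ne'⟩

lemma prod_range_pow_sub_pow_succ {R : Type*} [CommRing R] (q : R) (n k : ℕ) :
    ∏ i ∈ range (k + 1), (q ^ (n + 1) - q ^ i) =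
      (q ^ (n + 1) - 1) * q ^ k * ∏ i ∈ range k, (q ^ n - q ^ i) := by
  have h : ∀ i, q ^ (n + 1) - q ^ (i + 1) = (q ^ n - q ^ i) * q := fun i => by ring
  rw [prod_range_succ', pow_zero]
  simp only [h, prod_mul_distrib, prod_const, card_range]
  ring

/-- The `q`-analogue of `n.choose k * k! = n! / (n - k)!`: `∏_{i<k} (q^n - q^i)` counts the
linearly independent `k`-tuples in `𝔽_q^n`. -/
lemma gaussChoose_mul_prod_pow_sub_pow (q n k : ℕ) :
    (gaussChoose q n k : ℤ) * ∏ i ∈ range k, ((q : ℤ) ^ k - (q : ℤ) ^ i) =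
      ∏ i ∈ range k, ((q : ℤ) ^ n - (q : ℤ) ^ i) := by
  induction n generalizing k with
  | zero =>
    rcases k with _ | k
    · simp [gaussChoose_zero_right]
    · rw [gaussChoose_eq_zero_of_lt k.succ_pos, Nat.cast_zero, zero_mul, eq_comm]
      exact prod_eq_zero (mem_range.2 k.succ_pos) (by simp)
  | succ n ih =>
    rcases k with _ | k
    · simp [gaussChoose_zero_right]
    have hk := ih k
    have hk1 := ih (k + 1)
    rw [prod_range_pow_sub_pow_succ, prod_range_succ] at hk1
    rw [gaussChoose, prod_range_pow_sub_pow_succ, prod_range_pow_sub_pow_succ]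
    push_cast
    linear_combination ((q : ℤ) ^ (k + 1) - 1) * (q : ℤ) ^ k * hk + (q : ℤ) ^ (k + 1) * hk1

lemma cast_prod_pow_sub_pow {q : ℕ} (hq : 1 ≤ q) {n k : ℕ} (hk : k ≤ n) :
    ((∏ i : Fin k, (q ^ n - q ^ (i : ℕ)) : ℕ) : ℤ) = ∏ i ∈ range k, ((q : ℤ) ^ n - (q : ℤ) ^ i) := by
  rw [Fin.prod_univ_eq_prod_range (fun i => q ^ n - q ^ i), Nat.cast_prod]
  refine prod_congr rfl fun i hi => ?_
  rw [Nat.cast_sub (Nat.pow_le_pow_right hq (by rw [mem_range] at hi; omega))]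
  push_cast
  rfl

lemma forall_lt_sub_succ_iff {ν : ℕ} {P : ℕ → ℕ → Prop} :
    (∀ i < ν, P (ν - (i + 1)) (ν - i)) ↔ ∀ i, i + 1 ≤ ν → P i (i + 1) := by
  refine ⟨fun h j hj => ?_, fun h i hi => ?_⟩
  · have := h (ν - (j + 1)) (by omega)
    rwa [show ν - (ν - (j + 1) + 1) = j by omega, show ν - (ν - (j + 1)) = j + 1 by omega]
      at this
  · have := h (ν - (i + 1)) (by omega)
    rwa [show ν - (i + 1) + 1 = ν - i by omega] at this

theorem Nat.card_eq_card_mul_of_card_fiber {α β : Type*} [Finite α] [Finite β] (π : α → β)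
    {c : ℕ} (h : ∀ b, Nat.card {a // π a = b} = c) : Nat.card α = Nat.card β * c := by
  have := Fintype.ofFinite β
  rw [← Nat.card_congr (Equiv.sigmaFiberEquiv π), Nat.card_sigma]
  simp [h, Nat.card_eq_fintype_card]

section Subspaces

variable {K V W : Type*} [Field K] [AddCommGroup V] [Module K V] [AddCommGroup W] [Module K W]

theorem finrank_comap_of_surjective [FiniteDimensional K V] {f : V →ₗ[K] W}
    (hf : Function.Surjective f) (T : Submodule K W) :
    finrank K (T.comap f) = finrank K (LinearMap.ker f) + finrank K T := by
  have : FiniteDimensional K W := Module.Finite.of_surjective f hf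
  have hsurj : Function.Surjective (T.mkQ ∘ₗ f) := T.mkQ_surjective.comp hf
  have hquot := (T.mkQ ∘ₗ f).finrank_range_add_finrank_ker
  rw [LinearMap.range_eq_top.2 hsurj, finrank_top, LinearMap.ker_comp,
    ker_mkQ] at hquot
  have hf_rank := f.finrank_range_add_finrank_ker
  rw [LinearMap.range_eq_top.2 hf, finrank_top] at hf_rank
  have := T.finrank_quotient_add_finrank
  omega

def linearIndependentSpanEqEquiv {k : ℕ} [FiniteDimensional K V] (U : Submodule K V)
    (hU : finrank K U = k) :
    {s : {s : Fin k → V // LinearIndependent K s} // span K (Set.range s.1) = U} ≃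
      {t : Fin k → U // LinearIndependent K t} where
  toFun s := ⟨fun i => ⟨s.1.1 i, s.2.le (subset_span (Set.mem_range_self i))⟩,
    s.1.2.of_comp U.subtype⟩
  invFun t := ⟨⟨U.subtype ∘ t.1, t.2.map' _ U.ker_subtype⟩, by
    rw [Set.range_comp, ← map_span, t.2.span_eq_top_of_card_eq_finrank' (by simp [hU]),
      map_subtype_top]⟩
  left_inv _ := rfl
  right_inv _ := rfl

end Subspaces

section FiniteField

variable {K V : Type*} [Field K] [Fintype K] [AddCommGroup V] [Module K V] [Finite V]

/-- Double counting: each `k`-dimensional subspace is spanned by exactly as many linearly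
independent `k`-tuples as there are in `K^k`. -/
theorem card_subspaces_finrank_eq (k : ℕ) :
    Nat.card {U : Submodule K V // finrank K U = k} =
      gaussChoose (Fintype.card K) (finrank K V) k := by
  rcases lt_or_ge (finrank K V) k with hlt | hk
  · rw [gaussChoose_eq_zero_of_lt hlt, Nat.card_eq_zero]
    exact Or.inl ⟨fun U => (U.2 ▸ U.1.finrank_le).not_gt hlt⟩
  set q := Fintype.card K
  have hq : 1 < q := Fintype.one_lt_card
  let spanOf (s : {s : Fin k → V // LinearIndependent K s}) :
      {U : Submodule K V // finrank K U = k} :=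
    ⟨span K (Set.range s.1), by rw [finrank_span_eq_card s.2, Fintype.card_fin]⟩
  have hdouble : Nat.card {s : Fin k → V // LinearIndependent K s} =
      Nat.card {U : Submodule K V // finrank K U = k} * ∏ i : Fin k, (q ^ k - q ^ (i : ℕ)) :=
    Nat.card_eq_card_mul_of_card_fiber spanOf fun U => by
      have hU := card_linearIndependent (K := K) (V := U.1) U.2.ge
      rw [U.2] at hU
      rw [← hU]
      exact Nat.card_congr ((Equiv.subtypeEquivRight fun s => Subtype.ext_iff).trans
        (linearIndependentSpanEqEquiv U.1 U.2))
  rw [card_linearIndependent hk] at hdouble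
  have hprod : ∏ i ∈ range k, ((q : ℤ) ^ k - (q : ℤ) ^ i) ≠ 0 :=
    prod_ne_zero_iff.2 fun i hi =>
      sub_ne_zero.2 (pow_lt_pow_right₀ (by exact_mod_cast hq) (mem_range.1 hi)).ne'
  apply Nat.cast_injective (R := ℤ)
  apply mul_right_cancel₀ hprod
  rw [gaussChoose_mul_prod_pow_sub_pow, ← cast_prod_pow_sub_pow hq.le le_rfl, ← Nat.cast_mul,
    ← hdouble, cast_prod_pow_sub_pow hq.le hk]

theorem card_subspaces_le_finrank_eq (P : Submodule K V) (k : ℕ) :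
    Nat.card {U : Submodule K V // U ≤ P ∧ finrank K U = k} =
      gaussChoose (Fintype.card K) (finrank K P) k := by
  rw [← card_subspaces_finrank_eq]
  refine Nat.card_congr (Equiv.symm ?_)
  refine ((MapSubtype.orderIso P).toEquiv.subtypeEquiv fun U => ?_).trans
    (Equiv.subtypeSubtypeEquivSubtypeInter _ _)
  change _ ↔ finrank K (U.map P.subtype) = k
  rw [finrank_map_subtype_eq]

end FiniteField

section Subrepresentations

variable {K : Type*} [Field K] {V : ℕ → Type*} [∀ i, AddCommGroup (V i)] [∀ i, Module K (V i)]

def subrepsOfDim (ν : ℕ) (f : ∀ i, V i →ₗ[K] V (i + 1)) (r : ℕ → ℕ) :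
    Set (∀ i : Fin (ν + 1), Submodule K (V i)) :=
  {U | (∀ i, finrank K (U i) = r i) ∧ ∀ i : Fin ν, (U i.castSucc).map (f i) ≤ U i.succ}

variable {ν : ℕ} {f : ∀ i, V i →ₗ[K] V (i + 1)} {r : ℕ → ℕ}

def subrepsOfDimTail (U : subrepsOfDim (ν + 1) f r) :
    subrepsOfDim ν (fun i => f (i + 1)) (fun i => r (i + 1)) :=
  ⟨Fin.tail U.1, fun i => U.2.1 i.succ, fun i => U.2.2 i.succ⟩

def subrepsOfDimTailFiberEquiv (u : subrepsOfDim ν (fun i => f (i + 1)) (fun i => r (i + 1))) :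
    {U : subrepsOfDim (ν + 1) f r // subrepsOfDimTail U = u} ≃
      {W : Submodule K (V 0) // W ≤ (u.1 0).comap (f 0) ∧ finrank K W = r 0} where
  toFun U := ⟨U.1.1 0, map_le_iff_le_comap.1 <|
      (U.1.2.2 0).trans_eq (congrArg (fun v => v.1 0) U.2), U.1.2.1 0⟩
  invFun W := ⟨⟨Fin.cons W.1 u.1,
      Fin.forall_fin_succ.2 ⟨W.2.2, fun i => u.2.1 i⟩,
      Fin.forall_fin_succ.2 ⟨map_le_iff_le_comap.2 W.2.1, fun i => u.2.2 i⟩⟩,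
    rfl⟩
  left_inv := by
    rintro ⟨U, rfl⟩
    exact Subtype.ext (Subtype.ext (Fin.cons_self_tail U.1))
  right_inv _ := rfl

theorem card_subrepsOfDim [Fintype K] [∀ i, Finite (V i)]
    (hf : ∀ i < ν, Function.Surjective (f i)) :
    Nat.card (subrepsOfDim ν f r) =
      (∏ i ∈ range ν,
        gaussChoose (Fintype.card K) (finrank K (LinearMap.ker (f i)) + r (i + 1)) (r i)) *
        gaussChoose (Fintype.card K) (finrank K (V ν)) (r ν) := by
  induction ν generalizing V r with
  | zero =>
    rw [range_zero, prod_empty, one_mul, ← card_subspaces_finrank_eq]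
    exact Nat.card_congr ((Equiv.piUnique fun i : Fin 1 => Submodule K (V i)).subtypeEquiv
      fun U => by simp [subrepsOfDim]; rfl)
  | succ ν ih =>
    have hfib (u : subrepsOfDim ν (fun i => f (i + 1)) (fun i => r (i + 1))) :
        Nat.card {U // subrepsOfDimTail U = u} =
          gaussChoose (Fintype.card K) (finrank K (LinearMap.ker (f 0)) + r 1) (r 0) := by
      have hdim : finrank K ((u.1 0).comap (f 0)) = finrank K (LinearMap.ker (f 0)) + r 1 :=
        (finrank_comap_of_surjective (hf 0 ν.succ_pos) _).trans (congrArg _ (u.2.1 0))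
      rw [Nat.card_congr (subrepsOfDimTailFiberEquiv u), card_subspaces_le_finrank_eq, hdim]
    rw [Nat.card_eq_card_mul_of_card_fiber subrepsOfDimTail hfib,
      ih (fun i hi => hf (i + 1) (by omega)), prod_range_succ']
    ring

theorem nonempty_subrepsOfDim_iff [Fintype K] [∀ i, Finite (V i)]
    (hf : ∀ i < ν, Function.Surjective (f i)) :
    (subrepsOfDim ν f r).Nonempty ↔
      (∀ i < ν, r i ≤ finrank K (LinearMap.ker (f i)) + r (i + 1)) ∧ r ν ≤ finrank K (V ν) := by
  rw [← Set.nonempty_coe_sort, ← Finite.card_pos_iff, Nat.pos_iff_ne_zero, card_subrepsOfDim hf,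
    mul_ne_zero_iff, prod_ne_zero_iff]
  simp only [mem_range, gaussChoose_ne_zero_iff]

end Subrepresentations

/-- Let `K` be a finite field with `q` elements and let
`X : K^{e^ν + r^0} ↠ K^{e^{ν-1} + r^1} ↠ ⋯ ↠ K^{e^0 + r^ν}` be a representation of the
linearly oriented quiver `A_{ν+1}` with surjective structure maps. Then `X` has a
subrepresentation of dimension vector `(r^0, …, r^ν)` iff `e^i ≤ e^{i+1}` for all `i`
(and `e^0 ≥ 0`, automatic in `ℕ`); in that case the number of such subrepresentations equals
`∏_{i=0}^ν [e^{ν-i} - e^{ν-i-1} + r^i choose r^i]_q` (with `e^{-1} := 0`). -/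
theorem count_subreps_of_injective_Arep (K : Type) [Field K] [Fintype K]
    (q : ℕ) (hq : q = Fintype.card K) (ν : ℕ) (e r : ℕ → ℕ)
    (f : ∀ i : ℕ, ((Fin (e (ν - i) + r i) → K) →ₗ[K] (Fin (e (ν - (i + 1)) + r (i + 1)) → K)))
    (hf : ∀ i, i < ν → Function.Surjective (f i)) :
    ((∃ U : ∀ i : Fin (ν + 1), Submodule K (Fin (e (ν - (i : ℕ)) + r i) → K),
        (∀ i : Fin (ν + 1), Module.finrank K (U i) = r (i : ℕ)) ∧
        (∀ i : Fin ν, (U i.castSucc).map (f (i : ℕ)) ≤ U i.succ)) ↔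
      (∀ i : ℕ, i + 1 ≤ ν → e i ≤ e (i + 1))) ∧
    ((∀ i : ℕ, i + 1 ≤ ν → e i ≤ e (i + 1)) →
      Nat.card {U : ∀ i : Fin (ν + 1), Submodule K (Fin (e (ν - (i : ℕ)) + r i) → K) //
          (∀ i : Fin (ν + 1), Module.finrank K (U i) = r (i : ℕ)) ∧
          (∀ i : Fin ν, (U i.castSucc).map (f (i : ℕ)) ≤ U i.succ)} =
        ∏ i ∈ Finset.range (ν + 1),
          gaussChoose q (e (ν - i) - (if i = ν then 0 else e (ν - i - 1)) + r i) (r i)) := by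
  subst hq
  have hker (i : ℕ) (hi : i < ν) :
      finrank K (LinearMap.ker (f i)) + (e (ν - (i + 1)) + r (i + 1)) = e (ν - i) + r i := by
    have := (f i).finrank_range_add_finrank_ker
    rw [LinearMap.range_eq_top.2 (hf i hi), finrank_top, finrank_fin_fun, finrank_fin_fun] at this
    omega
  have hmono_iff := forall_lt_sub_succ_iff (ν := ν) (P := fun a b => e a ≤ e b)
  refine ⟨(nonempty_subrepsOfDim_iff (V := fun i => Fin (e (ν - i) + r i) → K) hf).trans ?_,
    fun hmono => (card_subrepsOfDim (V := fun i => Fin (e (ν - i) + r i) → K) hf).trans ?_⟩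
  · rw [finrank_fin_fun, and_iff_left (Nat.le_add_left _ _), ← hmono_iff]
    exact forall₂_congr fun i hi => by have := hker i hi; omega
  · rw [prod_range_succ, if_pos rfl, finrank_fin_fun, Nat.sub_zero]
    refine congrArg (· * _) (prod_congr rfl fun i hi => ?_)
    rw [mem_range] at hi
    rw [if_neg hi.ne, show ν - i - 1 = ν - (i + 1) by omega]
    have hdim := hker i hi
    have hle := hmono_iff.2 hmono i hi
    congr 1
    omega
end

section
/- Let R be a commutative ring, d, e ∈ ℕ, and let f : R^d → R^{d+e} and g : R^{d+e} → R^e be R-linear maps such that f is a split injection, g is surjective, and g ∘ f = 0. Then 0 → R^d → R^{d+e} → R^e → 0 is a short exact sequence, i.e. the image of f equals the kernel of g. -/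
/-!
Let `ρ` split `f` and let `s` be a section of `g` (it exists since `R^e` is projective).
The map `(ρ, g) : R^{d+e} → R^d × R^e` is surjective, with `(a, b)` hit by
`f a + s b - f (ρ (s b))`. Since `R^{d+e} ≅ R^d × R^e` is finitely generated over a commutative
ring, a surjection between them is injective (Orzech's theorem), and for `x ∈ ker g`
injectivity applied to `(ρ, g) (f (ρ x)) = (ρ x, 0) = (ρ, g) x` gives `x = f (ρ x)`.
-/

namespace LinearMap

variable {R M N P : Type*} [Ring R] [AddCommGroup M] [AddCommGroup N] [AddCommGroup P]
  [Module R M] [Module R N] [Module R P]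
  {f : N →ₗ[R] M} {g : M →ₗ[R] P} {ρ : M →ₗ[R] N}

theorem surjective_prod_of_comp_eq_id {s : P →ₗ[R] M} (hρ : ρ ∘ₗ f = id) (hs : g ∘ₗ s = id)
    (hgf : g ∘ₗ f = 0) : Function.Surjective (ρ.prod g) := by
  rintro ⟨a, b⟩
  refine ⟨f a + s b - f (ρ (s b)), ?_⟩
  have hρf (n : N) : ρ (f n) = n := LinearMap.congr_fun hρ n
  have hgs : g (s b) = b := LinearMap.congr_fun hs b
  have hgf' (n : N) : g (f n) = 0 := LinearMap.congr_fun hgf n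
  simp [hρf, hgs, hgf']

theorem range_eq_ker_of_injective_prod (hρ : ρ ∘ₗ f = id) (hgf : g ∘ₗ f = 0)
    (hinj : Function.Injective (ρ.prod g)) : range f = ker g := by
  refine le_antisymm (range_le_ker_iff.mpr hgf) fun x hx => ⟨ρ x, hinj ?_⟩
  have hρf : ρ (f (ρ x)) = ρ x := LinearMap.congr_fun hρ (ρ x)
  have hgf' : g (f (ρ x)) = 0 := LinearMap.congr_fun hgf (ρ x)
  simp [hρf, hgf', mem_ker.mp hx]

end LinearMap

/-- If `f : R^d → R^{d+e}` is a split injection, `g : R^{d+e} → R^e` is surjective and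
`g ∘ f = 0`, then `0 → R^d → R^{d+e} → R^e → 0` is a short exact sequence, i.e.
the image of `f` equals the kernel of `g`. -/
theorem range_eq_ker_of_split (R : Type) [CommRing R] (d e : ℕ)
    (f : (Fin d → R) →ₗ[R] (Fin (d + e) → R)) (g : (Fin (d + e) → R) →ₗ[R] (Fin e → R))
    (hsplit : ∃ ρ : (Fin (d + e) → R) →ₗ[R] (Fin d → R), ρ.comp f = LinearMap.id)
    (hg : Function.Surjective g) (hgf : g.comp f = 0) :
    LinearMap.range f = LinearMap.ker g := by
  obtain ⟨ρ, hρ⟩ := hsplit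
  obtain ⟨s, hs⟩ := Module.projective_lifting_property g LinearMap.id hg
  let E : (Fin (d + e) → R) ≃ₗ[R] (Fin d → R) × (Fin e → R) :=
    (LinearEquiv.funCongrLeft R R finSumFinEquiv).trans
      (LinearEquiv.sumArrowLequivProdArrow _ _ R R)
  refine LinearMap.range_eq_ker_of_injective_prod hρ hgf ?_
  exact OrzechProperty.injective_of_surjective_of_injective E.toLinearMap _ E.injective
    (LinearMap.surjective_prod_of_comp_eq_id hρ hs hgf)
end

section
/- Let a be a sink of a quiver Q, let M be a representation of Q over a field K, and let s = dim Hom(M, S_a) where S_a is the simple representation at a. Then the dimension vector of the reflected representation S_a^+ M satisfies dim(S_a^+ M) = σ_a(dim M - s·ε_a) = σ_a(dim M) + s·ε_a, where σ_a is the simple reflection on dimension vectors. -/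
/-! At a sink `a`, rank–nullity for `φ` gives `dim ker φ = ∑_{α : j → a} dim M_j - rank φ`,
while, since no arrow leaves `a`, the symmetrized Euler form is
`(d, ε_a) = 2 d_a - ∑_{α : j → a} d_j`. Comparing the two at the vertex `a` gives the formula;
at every other vertex both sides are `d_i`. -/

variable (Q₀ A : Type) [Fintype Q₀] [DecidableEq Q₀] [Fintype A]

/-- The Euler form of the quiver with vertex set `Q₀` and arrow set `A`. -/
def eulerForm (src tgt : A → Q₀) (x y : Q₀ → ℤ) : ℤ :=
  (∑ i, x i * y i) - ∑ α : A, x (src α) * y (tgt α)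

/-- The `a`-th coordinate vector `ε_a`. -/
def eps (a : Q₀) : Q₀ → ℤ := fun i => if i = a then 1 else 0

section

variable {Q₀ A}

theorem eulerForm_eps_right (src tgt : A → Q₀) (x : Q₀ → ℤ) (a : Q₀) :
    eulerForm Q₀ A src tgt x (eps Q₀ a) = x a - ∑ α : {β : A // tgt β = a}, x (src α.1) := by
  simp only [eulerForm, eps, mul_ite, mul_one, mul_zero, Finset.sum_ite_eq', Finset.mem_univ,
    if_true, ← Finset.sum_filter]
  rw [Finset.sum_subtype _ (fun _ => Finset.mem_filter_univ _) _]

theorem eulerForm_eps_left_of_sink (src tgt : A → Q₀) (y : Q₀ → ℤ) (a : Q₀)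
    (hsink : ∀ α, src α ≠ a) :
    eulerForm Q₀ A src tgt (eps Q₀ a) y = y a := by
  simp [eulerForm, eps, hsink]

theorem finrank_ker_eq_sum_sub_finrank_range (K : Type) [Field K] {ι : Type} [Fintype ι]
    (W : ι → Type) [∀ i, AddCommGroup (W i)] [∀ i, Module K (W i)]
    [∀ i, FiniteDimensional K (W i)]
    {U : Type} [AddCommGroup U] [Module K U] (φ : (∀ i, W i) →ₗ[K] U) :
    (Module.finrank K (LinearMap.ker φ) : ℤ) =
      ∑ i, (Module.finrank K (W i) : ℤ) - Module.finrank K (LinearMap.range φ) := by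
  have h : ((Module.finrank K (LinearMap.range φ) + Module.finrank K (LinearMap.ker φ) : ℕ) : ℤ)
      = ∑ i, (Module.finrank K (W i) : ℤ) := by
    rw [φ.finrank_range_add_finrank_ker, Module.finrank_pi_fintype, Nat.cast_sum]
  push_cast at h
  linarith

end

theorem dim_reflection_functor (K : Type) [Field K]
    (src tgt : A → Q₀) (a : Q₀) (hsink : ∀ α, src α ≠ a)
    (V : Q₀ → Type) [∀ i, AddCommGroup (V i)] [∀ i, Module K (V i)]
    [∀ i, FiniteDimensional K (V i)]
    (φ : (∀ α : {β : A // tgt β = a}, V (src α.1)) →ₗ[K] V a)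
    (d : Q₀ → ℤ) (hd : ∀ i, d i = Module.finrank K (V i))
    (s : ℤ) (hs : s = Module.finrank K (V a) - Module.finrank K (LinearMap.range φ)) :
    ∀ i, (if i = a then (Module.finrank K (LinearMap.ker φ) : ℤ) else d i) =
      d i - (eulerForm Q₀ A src tgt d (eps Q₀ a) + eulerForm Q₀ A src tgt (eps Q₀ a) d)
          * eps Q₀ a i
        + s * eps Q₀ a i := by
  intro i
  by_cases hi : i = a
  · subst hi
    rw [if_pos rfl, eulerForm_eps_right, eulerForm_eps_left_of_sink src tgt d i hsink,
      finrank_ker_eq_sum_sub_finrank_range, hs]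
    simp only [eps, if_true, hd]
    ring
  · simp [eps, hi]
end

section
/- Let Λ_0 be a ring, Λ_1 a Λ_0-bimodule, and Λ = T(Λ_0, Λ_1) the tensor ring ⊕_{r≥0} Λ_1^{⊗_{Λ_0} r}. For every right Λ-module M there is a short exact sequence of Λ-modules 0 → M ⊗_{Λ_0} Λ_1 ⊗_{Λ_0} Λ → M ⊗_{Λ_0} Λ → M → 0, where the right map is m ⊗ λ ↦ m·λ and the left map is m ⊗ μ ⊗ λ ↦ m ⊗ (μ ⊗ λ) - (m·μ) ⊗ λ. -/
/-!
The sequence is split exact as a sequence of `R`-modules. The splitting `x ↦ 1 ⊗ x` of `ε` is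
completed by a contracting homotopy `h : Λ ⊗ X → Λ ⊗ M ⊗ X`, `h (l ⊗ x) = D l x`, where
`D : Λ → Hom_R(X, Λ ⊗ M ⊗ X)` is the unique map with `D (ι μ) x = 1 ⊗ μ ⊗ x` satisfying the Leibniz
rule `D (a * b) x = a • D b x + D a (b • x)`. Then `h ∘ δ = id` and `δ ∘ h = id - (1 ⊗ ε ·)`, which
give injectivity of `δ` and `ker ε ⊆ im δ`.
-/

open TensorProduct

noncomputable section

namespace TensorAlgebra

section DerivationLift

variable {R M : Type*} [CommRing R] [AddCommGroup M] [Module R M]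
  {X P : Type*} [AddCommGroup X] [Module R X] [Module (TensorAlgebra R M) X]
  [IsScalarTower R (TensorAlgebra R M) X]
  [AddCommGroup P] [Module R P] [Module (TensorAlgebra R M) P]
  [IsScalarTower R (TensorAlgebra R M) P]

/-- The Leibniz rule for `D` says exactly that `a ↦ [[a •, D a], [0, a •]]` is multiplicative, so
`D` is read off from the algebra map into `End (P × X)` sending `ι μ` to `[[ι μ •, d μ], [0, ι μ •]]`. -/
def triangularGenerator (d : M →ₗ[R] X →ₗ[R] P) : M →ₗ[R] Module.End R (P × X) where
  toFun μ := (Algebra.lsmul R R P (ι R μ)).prodMap (Algebra.lsmul R R X (ι R μ)) +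
    LinearMap.inl R P X ∘ₗ d μ ∘ₗ LinearMap.snd R P X
  map_add' μ ν := by ext <;> simp
  map_smul' r μ := by ext <;> simp

def triangularLift (d : M →ₗ[R] X →ₗ[R] P) : TensorAlgebra R M →ₐ[R] Module.End R (P × X) :=
  lift R (triangularGenerator d)

def derivationLift (d : M →ₗ[R] X →ₗ[R] P) : TensorAlgebra R M →ₗ[R] X →ₗ[R] P :=
  LinearMap.llcomp R X (P × X) P (LinearMap.fst R P X) ∘ₗ
    LinearMap.lcomp R (P × X) (LinearMap.inr R P X) ∘ₗ (triangularLift d).toLinearMap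

variable (d : M →ₗ[R] X →ₗ[R] P)

theorem derivationLift_apply (a : TensorAlgebra R M) (x : X) :
    derivationLift d a x = (triangularLift d a (0, x)).1 := rfl

theorem triangularLift_apply (a : TensorAlgebra R M) (p : P) (x : X) :
    triangularLift d a (p, x) = (a • p + derivationLift d a x, a • x) := by
  induction a using TensorAlgebra.induction generalizing p x with
  | algebraMap r => simp [derivationLift_apply, algebraMap_smul]
  | ι μ => simp [derivationLift_apply, triangularLift, triangularGenerator]
  | mul a b ha hb =>
    have hab (p : P) : triangularLift d (a * b) (p, x) =
        (a • (b • p + derivationLift d b x) + derivationLift d a (b • x), (a * b) • x) := by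
      rw [map_mul, Module.End.mul_apply, hb, ha, mul_smul]
    rw [derivationLift_apply, hab, hab]
    simp [smul_add, mul_smul, add_assoc]
  | add a b ha hb =>
    rw [map_add, LinearMap.add_apply, ha, hb, map_add, LinearMap.add_apply]
    simp [add_smul, add_add_add_comm]

theorem derivationLift_ι (μ : M) (x : X) : derivationLift d (ι R μ) x = d μ x := by
  simp [derivationLift_apply, triangularLift, triangularGenerator]

theorem derivationLift_algebraMap (r : R) : derivationLift d (algebraMap R _ r) = 0 := by
  ext x
  simp [derivationLift_apply]

theorem derivationLift_mul (a b : TensorAlgebra R M) (x : X) :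
    derivationLift d (a * b) x = a • derivationLift d b x + derivationLift d a (b • x) := by
  rw [derivationLift_apply, map_mul, Module.End.mul_apply, triangularLift_apply,
    triangularLift_apply]
  simp

end DerivationLift

section StandardSequence

variable (R M X : Type*) [CommRing R] [AddCommGroup M] [Module R M]
  [AddCommGroup X] [Module R X] [Module (TensorAlgebra R M) X]
  [IsScalarTower R (TensorAlgebra R M) X]

def standardEpsilon : TensorAlgebra R M ⊗[R] X →ₗ[R] X :=
  TensorProduct.lift (Algebra.lsmul R R X).toLinearMap

def standardDelta :
    TensorAlgebra R M ⊗[R] (M ⊗[R] X) →ₗ[TensorAlgebra R M] TensorAlgebra R M ⊗[R] X :=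
  AlgebraTensorModule.lift <| LinearMap.toSpanSingleton _ _ <|
    (LinearMap.id - TensorProduct.mk R _ X 1 ∘ₗ standardEpsilon R M X) ∘ₗ
      TensorProduct.map (ι R) LinearMap.id

def standardHomotopy : TensorAlgebra R M ⊗[R] X →ₗ[R] TensorAlgebra R M ⊗[R] (M ⊗[R] X) :=
  TensorProduct.lift <| derivationLift <|
    (TensorProduct.mk R M X).compr₂ (TensorProduct.mk R (TensorAlgebra R M) (M ⊗[R] X) 1)

variable {R M X}

@[simp] theorem standardEpsilon_tmul (l : TensorAlgebra R M) (x : X) :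
    standardEpsilon R M X (l ⊗ₜ x) = l • x := rfl

@[simp] theorem standardDelta_tmul (l : TensorAlgebra R M) (μ : M) (x : X) :
    standardDelta R M X (l ⊗ₜ (μ ⊗ₜ x)) = (l * ι R μ) ⊗ₜ x - l ⊗ₜ (ι R μ • x) := by
  simp [standardDelta, smul_sub, smul_tmul']

@[simp] theorem standardHomotopy_tmul (l : TensorAlgebra R M) (x : X) :
    standardHomotopy R M X (l ⊗ₜ x) = derivationLift
      ((TensorProduct.mk R M X).compr₂ (TensorProduct.mk R (TensorAlgebra R M) (M ⊗[R] X) 1)) l x :=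
  rfl

theorem standardEpsilon_comp_standardDelta :
    standardEpsilon R M X ∘ₗ (standardDelta R M X).restrictScalars R = 0 :=
  TensorProduct.ext_threefold' fun l μ x ↦ by simp [mul_smul]

theorem standardHomotopy_comp_standardDelta :
    standardHomotopy R M X ∘ₗ (standardDelta R M X).restrictScalars R = LinearMap.id :=
  TensorProduct.ext_threefold' fun l μ x ↦ by
    simp [derivationLift_mul, derivationLift_ι, smul_tmul']

theorem standardDelta_comp_standardHomotopy :
    (standardDelta R M X).restrictScalars R ∘ₗ standardHomotopy R M X =
      LinearMap.id - TensorProduct.mk R _ X 1 ∘ₗ standardEpsilon R M X := by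
  refine TensorProduct.ext' fun l x ↦ ?_
  simp only [LinearMap.comp_apply, LinearMap.coe_restrictScalars, standardHomotopy_tmul,
    LinearMap.sub_apply, LinearMap.id_apply, standardEpsilon_tmul, TensorProduct.mk_apply]
  induction l using TensorAlgebra.induction generalizing x with
  | algebraMap r =>
    rw [derivationLift_algebraMap]
    simp [Algebra.algebraMap_eq_smul_one, smul_tmul]
  | ι μ => simp [derivationLift_ι]
  | mul a b ha hb =>
    rw [derivationLift_mul, map_add, map_smul, ha, hb, mul_smul]
    simp [smul_sub, smul_tmul']
  | add a b ha hb =>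
    simp [ha, hb, add_tmul, add_smul, tmul_add]
    abel

end StandardSequence

end TensorAlgebra

/-- The standard short exact sequence for modules over a tensor ring
`Λ = T(R, M₁) = TensorAlgebra R M₁`: for every `Λ`-module `X` there is a short exact
sequence `0 → Λ ⊗ M₁ ⊗ X → Λ ⊗ X → X → 0`, with `ε(λ ⊗ x) = λ • x` and
`δ(λ ⊗ μ ⊗ x) = (λ·ι(μ)) ⊗ x - λ ⊗ (ι(μ) • x)`. -/
theorem tensor_ring_standard_ses (R M₁ X : Type) [CommRing R]
    [AddCommGroup M₁] [Module R M₁] [AddCommGroup X] [Module R X]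
    [Module (TensorAlgebra R M₁) X] [IsScalarTower R (TensorAlgebra R M₁) X] :
    ∃ (δ : TensorAlgebra R M₁ ⊗[R] (M₁ ⊗[R] X) →ₗ[R] TensorAlgebra R M₁ ⊗[R] X)
      (ε : TensorAlgebra R M₁ ⊗[R] X →ₗ[R] X),
      (∀ (l : TensorAlgebra R M₁) (μ : M₁) (x : X),
        δ (l ⊗ₜ (μ ⊗ₜ x)) = (l * TensorAlgebra.ι R μ) ⊗ₜ x - l ⊗ₜ (TensorAlgebra.ι R μ • x)) ∧
      (∀ (l : TensorAlgebra R M₁) (x : X), ε (l ⊗ₜ x) = l • x) ∧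
      Function.Injective δ ∧ Function.Exact δ ε ∧ Function.Surjective ε := by
  refine ⟨(TensorAlgebra.standardDelta R M₁ X).restrictScalars R,
    TensorAlgebra.standardEpsilon R M₁ X, TensorAlgebra.standardDelta_tmul,
    TensorAlgebra.standardEpsilon_tmul, ?_, ?_, fun x ↦ ⟨1 ⊗ₜ x, one_smul _ x⟩⟩
  · exact Function.LeftInverse.injective (g := TensorAlgebra.standardHomotopy R M₁ X)
      (LinearMap.congr_fun TensorAlgebra.standardHomotopy_comp_standardDelta)
  · refine LinearMap.exact_of_comp_of_mem_range TensorAlgebra.standardEpsilon_comp_standardDelta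
      fun y hy ↦ ⟨TensorAlgebra.standardHomotopy R M₁ X y, ?_⟩
    simpa [hy] using LinearMap.congr_fun TensorAlgebra.standardDelta_comp_standardHomotopy y
end
end

section
/- Let K be an algebraically closed field, Q a quiver, and M, N finite dimensional representations of Q with Ext¹(M, N) = 0 and a given injection h : N → M. If g ∈ End(M) satisfies that g∘h is injective (so g·h(N) ≅ N), then M/h(N) degenerates to M/g(h(N)); that is, the orbit of M/g(h(N)) is contained in the orbit closure of M/h(N). More precisely, there is a short exact sequence 0 → M → M ⊕ M/h(N) → M/g(h(N)) → 0. -/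
/-!
For a submodule `S ≤ M` and `g : M → P`, the square formed by `g`, the quotient maps
`M → M ⧸ S`, `P → P ⧸ g(S)` and the induced map `M ⧸ S → P ⧸ g(S)` is a pushout, so
`0 → M → P × M ⧸ S → P ⧸ g(S) → 0` is exact except possibly at `M`, where the kernel of
`(g, mkQ)` is `ker g ⊓ S`. With `S = h(N)` and `P = M`, that kernel vanishes exactly because
`g ∘ h` is injective.
-/

open Function LinearMap

variable {R M N P : Type*} [Ring R] [AddCommGroup M] [Module R M] [AddCommGroup N] [Module R N]
  [AddCommGroup P] [Module R P]

def Submodule.pushoutQuotMap (g : M →ₗ[R] P) (S : Submodule R M) (T : Submodule R P)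
    (hST : S ≤ T.comap g) : P × (M ⧸ S) →ₗ[R] P ⧸ T :=
  T.mkQ ∘ₗ LinearMap.fst R P (M ⧸ S) - S.mapQ T g hST ∘ₗ LinearMap.snd R P (M ⧸ S)

namespace Submodule

variable (g : M →ₗ[R] P) (S : Submodule R M) (T : Submodule R P) (hST : S ≤ T.comap g)

@[simp]
theorem pushoutQuotMap_apply_mk (p : P) (m : M) :
    pushoutQuotMap g S T hST (p, Quotient.mk m) = Quotient.mk (p - g m) := by
  simp [pushoutQuotMap]

theorem surjective_pushoutQuotMap : Surjective (pushoutQuotMap g S T hST) := by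
  intro y
  obtain ⟨p, rfl⟩ := Quotient.mk_surjective T y
  exact ⟨(p, 0), by simpa using pushoutQuotMap_apply_mk g S T hST p 0⟩

theorem exact_prod_mkQ_pushoutQuotMap (hTS : T ≤ S.map g) :
    Exact (g.prod S.mkQ) (pushoutQuotMap g S T hST) := by
  intro y
  constructor
  · obtain ⟨p, x⟩ := y
    obtain ⟨m, rfl⟩ := Quotient.mk_surjective S x
    rw [pushoutQuotMap_apply_mk, Quotient.mk_eq_zero]
    intro hT
    obtain ⟨s, hs, hgs⟩ := hTS hT
    refine ⟨m + s, ?_⟩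
    simp [hgs, (Quotient.mk_eq_zero S).mpr hs]
  · rintro ⟨m, rfl⟩
    simp

end Submodule

theorem LinearMap.injective_prod_mkQ_range (h : N →ₗ[R] M) (g : M →ₗ[R] P)
    (hgh : Injective (g ∘ₗ h)) : Injective (g.prod (range h).mkQ) := by
  rw [← ker_eq_bot, ker_prod, Submodule.ker_mkQ, eq_bot_iff]
  rintro _ ⟨hx, n, rfl⟩
  have hn : n = 0 := hgh (by simpa using hx)
  simp [hn]

theorem ses_witnessing_degeneration (Λ : Type)
    [Ring Λ]
    (M N : Type) [AddCommGroup M] [Module Λ M]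
    [AddCommGroup N] [Module Λ N]
    (h : N →ₗ[Λ] M)
    (g : M →ₗ[Λ] M) (hgh : Function.Injective (g.comp h)) :
    Function.Injective (LinearMap.prod g (LinearMap.range h).mkQ) ∧
    Function.Exact (LinearMap.prod g (LinearMap.range h).mkQ)
      ((LinearMap.range (g.comp h)).mkQ.comp (LinearMap.fst Λ M (M ⧸ LinearMap.range h)) -
        (Submodule.mapQ (LinearMap.range h) (LinearMap.range (g.comp h)) g
            (by rintro x ⟨n, rfl⟩; exact ⟨n, rfl⟩)).comp
          (LinearMap.snd Λ M (M ⧸ LinearMap.range h))) ∧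
    Function.Surjective
      ((LinearMap.range (g.comp h)).mkQ.comp (LinearMap.fst Λ M (M ⧸ LinearMap.range h)) -
        (Submodule.mapQ (LinearMap.range h) (LinearMap.range (g.comp h)) g
            (by rintro x ⟨n, rfl⟩; exact ⟨n, rfl⟩)).comp
          (LinearMap.snd Λ M (M ⧸ LinearMap.range h))) :=
  ⟨injective_prod_mkQ_range h g hgh,
    Submodule.exact_prod_mkQ_pushoutQuotMap g _ _ _ (range_comp h g).le,
    Submodule.surjective_pushoutQuotMap g _ _ _⟩
end
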